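/- For every boolean function f, n(f) ≤ I[f]·4^{s(f)−1}. -/
import Mathlib


open Finset
open scoped Classical

namespace BF

noncomputable section

/-- flip the bits of `x` belonging to `B`. -/
def flipS {n : ℕ} (x : Fin n → Bool) (B : Finset (Fin n)) : Fin n → Bool :=
  fun i => if i ∈ B then !(x i) else x i

/-- flip the `i`-th bit of `x`. -/
def flip1 {n : ℕ} (x : Fin n → Bool) (i : Fin n) : Fin n → Bool :=
  fun j => if j = i then !(x j) else x j

/-- real value of a boolean. -/
def bval (b : Bool) : ℝ := if b then 1 else 0

/-- coefficient of the monomial `∏_{i ∈ S} x_i` in the unique multilinear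
real polynomial expansion of `f` (Möbius inversion over the subcube lattice). -/
def coeffS {n : ℕ} (f : (Fin n → Bool) → ℝ) (S : Finset (Fin n)) : ℝ :=
  ∑ T ∈ S.powerset, (-1 : ℝ) ^ (S.card - T.card) * f (fun i => decide (i ∈ T))

/-- degree of the multilinear expansion of a real-valued function on the cube. -/
def degF {n : ℕ} (f : (Fin n → Bool) → ℝ) : ℕ :=
  (Finset.univ.filter fun S : Finset (Fin n) => coeffS f S ≠ 0).sup Finset.card

/-- degree of a boolean function. -/
def degB {n : ℕ} (f : (Fin n → Bool) → Bool) : ℕ := degF (fun x => bval (f x))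

/-- block sensitivity of `f` at `x`. -/
def bsAt {n : ℕ} (f : (Fin n → Bool) → Bool) (x : Fin n → Bool) : ℕ :=
  (Finset.univ.filter fun 𝓑 : Finset (Finset (Fin n)) =>
      (∀ B ∈ 𝓑, f (flipS x B) ≠ f x) ∧
      ∀ A ∈ 𝓑, ∀ B ∈ 𝓑, A ≠ B → Disjoint A B).sup Finset.card

/-- block sensitivity of `f`. -/
def bs {n : ℕ} (f : (Fin n → Bool) → Bool) : ℕ := Finset.univ.sup (bsAt f)

/-- sensitivity of `f` at `x`. -/
def sx {n : ℕ} (f : (Fin n → Bool) → Bool) (x : Fin n → Bool) : ℕ :=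
  (Finset.univ.filter fun i => f (flip1 x i) ≠ f x).card

/-- (maximum) sensitivity of `f`. -/
def sens {n : ℕ} (f : (Fin n → Bool) → Bool) : ℕ := Finset.univ.sup (sx f)

/-- coordinate `i` is relevant for `f`. -/
def Rel {n : ℕ} (i : Fin n) (f : (Fin n → Bool) → Bool) : Prop :=
  ∃ x, f (flip1 x i) ≠ f x

/-- the set of relevant coordinates of `f`. -/
def relSet {n : ℕ} (f : (Fin n → Bool) → Bool) : Finset (Fin n) :=
  Finset.univ.filter fun i => Rel i f

/-- the number of relevant variables `n(f)`. -/
def nrel {n : ℕ} (f : (Fin n → Bool) → Bool) : ℕ := (relSet f).card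

/-- influence of coordinate `i` on `f` (uniform distribution). -/
def infl {n : ℕ} (f : (Fin n → Bool) → Bool) (i : Fin n) : ℝ :=
  ((Finset.univ.filter fun x : Fin n → Bool => f x ≠ f (flip1 x i)).card : ℝ) / 2 ^ n

/-- total influence `I[f]`. -/
def totalInf {n : ℕ} (f : (Fin n → Bool) → Bool) : ℝ := ∑ i, infl f i

/-- restriction of `f` fixing the coordinates in `H` according to `α`
(viewed as a function on the full cube not depending on the coordinates in `H`). -/
def restrict {n : ℕ} (f : (Fin n → Bool) → Bool) (H : Finset (Fin n))
    (α : Fin n → Bool) : (Fin n → Bool) → Bool :=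
  fun x => f (fun i => if i ∈ H then α i else x i)

/-- certificate complexity of `f` at `x`. -/
def certAt {n : ℕ} (f : (Fin n → Bool) → Bool) (x : Fin n → Bool) : ℕ :=
  sInf {k | ∃ S : Finset (Fin n), S.card = k ∧
    ∀ y, (∀ i ∈ S, y i = x i) → f y = f x}

/-- certificate complexity `C(f)`. -/
def certC {n : ℕ} (f : (Fin n → Bool) → Bool) : ℕ := Finset.univ.sup (certAt f)

/-- `f` is in standard form: `f(0) = 0` and `f(e_i) = 1` for every basis vector. -/
def stdForm {b : ℕ} (f : (Fin b → Bool) → Bool) : Prop :=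
  f (fun _ => false) = false ∧ ∀ i : Fin b, f (fun j => decide (j = i)) = true

end

end BF


namespace BF

lemma flip1_flip1 {n : ℕ} (x : Fin n → Bool) (i : Fin n) : flip1 (flip1 x i) i = x := by
  funext k; by_cases h : k = i <;> simp [flip1, h]

lemma flip1_comm {n : ℕ} (x : Fin n → Bool) (i j : Fin n) :
    flip1 (flip1 x i) j = flip1 (flip1 x j) i := by
  funext k
  by_cases h1 : k = j <;> by_cases h2 : k = i <;> by_cases h3 : j = i <;>
    simp_all [flip1]

lemma key {n : ℕ} (U : Finset (Fin n)) :
    ∀ (d : ℕ) (S : Finset ((Fin n) → Bool)), S.Nonempty →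
    (∀ x ∈ S, (U.filter fun j => flip1 x j ∉ S).card ≤ d) →
    2 ^ U.card ≤ 2 ^ d * S.card := by
  classical
  induction U using Finset.induction_on with
  | empty =>
      intro d S hne _
      have hp : 0 < 2 ^ d * S.card :=
        Nat.mul_pos (pow_pos (by norm_num) d) (Finset.card_pos.mpr hne)
      simp only [Finset.card_empty, pow_zero]
      exact hp
  | @insert a U haU ih =>
      intro d S hne h
      have hja : ∀ j ∈ U, a ≠ j := fun j hj he => haU (he ▸ hj)
      have hflipa : ∀ (x : Fin n → Bool), ∀ j ∈ U, flip1 x j a = x a := by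
        intro x j hj
        simp [flip1, hja j hj]
      -- membership in halves preserved under flips in U directions
      have hmem : ∀ (c : Bool), ∀ x ∈ S.filter (fun y => y a = c), ∀ j ∈ U,
          (flip1 x j ∉ S.filter (fun y => y a = c) ↔ flip1 x j ∉ S) := by
        intro c x hx j hj
        have hxa : x a = c := (Finset.mem_filter.mp hx).2
        simp [Finset.mem_filter, hflipa x j hj, hxa]
      have hb : ∀ (c : Bool), ∀ x ∈ S.filter (fun y => y a = c),
          ((U.filter fun j => flip1 x j ∉ S.filter (fun y => y a = c)).card
            ≤ (U.filter fun j => flip1 x j ∉ S).card) := by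
        intro c x hx
        apply Finset.card_le_card
        intro j hj
        rw [Finset.mem_filter] at hj ⊢
        exact ⟨hj.1, (hmem c x hx j hj.1).mp hj.2⟩
      have hsub : ∀ (x : Fin n → Bool),
          (U.filter fun j => flip1 x j ∉ S) ⊆ ((insert a U).filter fun j => flip1 x j ∉ S) :=
        fun x => Finset.filter_subset_filter _ (Finset.subset_insert a U)
      have hcardins : (insert a U).card = U.card + 1 := Finset.card_insert_of_notMem haU
      have hsplit : (S.filter (fun y => y a = false)).card
          + (S.filter (fun y => y a = true)).card = S.card := by
        rw [← Finset.card_filter_add_card_filter_not (p := fun y => y a = true) (s := S)]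
        simp [Bool.not_eq_true]
        ring
      by_cases h0 : (S.filter (fun y => y a = false)).Nonempty
      · by_cases h1 : (S.filter (fun y => y a = true)).Nonempty
        · -- both halves nonempty
          have i0 := ih d _ h0 (fun x hx => le_trans (hb false x hx)
            (le_trans (Finset.card_le_card (hsub x)) (h x (Finset.mem_filter.mp hx).1)))
          have i1 := ih d _ h1 (fun x hx => le_trans (hb true x hx)
            (le_trans (Finset.card_le_card (hsub x)) (h x (Finset.mem_filter.mp hx).1)))
          calc 2 ^ (insert a U).card = 2 ^ U.card + 2 ^ U.card := by rw [hcardins]; ring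
          _ ≤ 2 ^ d * (S.filter (fun y => y a = false)).card
              + 2 ^ d * (S.filter (fun y => y a = true)).card := Nat.add_le_add i0 i1
          _ = 2 ^ d * S.card := by rw [← Nat.mul_add, hsplit]
        · -- all of S has a-coordinate false
          have hall : ∀ x ∈ S, x a = false := by
            intro x hx
            by_contra hc
            exact h1 ⟨x, Finset.mem_filter.mpr ⟨hx, by simpa using hc⟩⟩
          have hacross : ∀ x ∈ S, flip1 x a ∉ S := by
            intro x hx hc
            have := hall _ hc
            simp [flip1, hall x hx] at this
          have hd : ∀ x ∈ S, (U.filter fun j => flip1 x j ∉ S).card + 1 ≤ d := by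
            intro x hx
            have : ((insert a U).filter fun j => flip1 x j ∉ S)
                = insert a (U.filter fun j => flip1 x j ∉ S) := by
              rw [Finset.filter_insert, if_pos (hacross x hx)]
            have hc := h x hx
            rw [this, Finset.card_insert_of_notMem (fun hm => haU (Finset.mem_filter.mp hm).1)]
              at hc
            exact hc
          obtain ⟨x0, hx0⟩ := id hne
          have hd1 : 1 ≤ d := le_trans (Nat.le_add_left 1 _) (hd x0 hx0)
          have i0 : 2 ^ U.card ≤ 2 ^ (d - 1) * S.card := by
            apply ih (d - 1) S hne
            intro x hx
            exact Nat.le_sub_of_add_le (hd x hx)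
          calc 2 ^ (insert a U).card = 2 * 2 ^ U.card := by rw [hcardins]; ring
            _ ≤ 2 * (2 ^ (d-1) * S.card) := Nat.mul_le_mul_left 2 i0
            _ = 2 ^ d * S.card := by
                rw [← Nat.mul_assoc, ← pow_succ']
                congr 2
                exact Nat.succ_pred_eq_of_pos hd1
      · -- all of S has a-coordinate true
        have hall : ∀ x ∈ S, x a = true := by
          intro x hx
          by_contra hc
          exact h0 ⟨x, Finset.mem_filter.mpr ⟨hx, by simpa using hc⟩⟩
        have hacross : ∀ x ∈ S, flip1 x a ∉ S := by
          intro x hx hc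
          have := hall _ hc
          simp [flip1, hall x hx] at this
        have hd : ∀ x ∈ S, (U.filter fun j => flip1 x j ∉ S).card + 1 ≤ d := by
          intro x hx
          have : ((insert a U).filter fun j => flip1 x j ∉ S)
              = insert a (U.filter fun j => flip1 x j ∉ S) := by
            rw [Finset.filter_insert, if_pos (hacross x hx)]
          have hc := h x hx
          rw [this, Finset.card_insert_of_notMem (fun hm => haU (Finset.mem_filter.mp hm).1)]
            at hc
          exact hc
        obtain ⟨x0, hx0⟩ := id hne
        have hd1 : 1 ≤ d := le_trans (Nat.le_add_left 1 _) (hd x0 hx0)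
        have i0 : 2 ^ U.card ≤ 2 ^ (d - 1) * S.card := by
          apply ih (d - 1) S hne
          intro x hx
          exact Nat.le_sub_of_add_le (hd x hx)
        calc 2 ^ (insert a U).card = 2 * 2 ^ U.card := by rw [hcardins]; ring
        _ ≤ 2 * (2 ^ (d-1) * S.card) := Nat.mul_le_mul_left 2 i0
        _ = 2 ^ d * S.card := by
            rw [← Nat.mul_assoc, ← pow_succ']
            congr 2
            exact Nat.succ_pred_eq_of_pos hd1

lemma rel_card {n : ℕ} (f : (Fin n → Bool) → Bool) (i : Fin n) (hrel : Rel i f) :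
    2 ^ n ≤ 2 ^ (2 * (sens f - 1)) *
      ((Finset.univ.filter fun x : Fin n → Bool => f x ≠ f (flip1 x i)).card) := by
  classical
  obtain ⟨x0, hx0⟩ := hrel
  set A := Finset.univ.filter fun x : Fin n → Bool => f x ≠ f (flip1 x i) with hA
  have hne : A.Nonempty := ⟨x0, by simp [hA]; exact fun h => hx0 h.symm⟩
  have hbound : ∀ x ∈ A, (Finset.univ.filter fun j => flip1 x j ∉ A).card
      ≤ 2 * (sens f - 1) := by
    intro x hx
    have hfx : f x ≠ f (flip1 x i) := by simpa [hA] using hx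
    set y := flip1 x i with hy
    set Sx := Finset.univ.filter fun j => f (flip1 x j) ≠ f x with hSx
    set Sy := Finset.univ.filter fun j => f (flip1 y j) ≠ f y with hSy
    have hiSx : i ∈ Sx := by simp [hSx]; exact fun h => hfx h.symm
    have hiSy : i ∈ Sy := by
      simp [hSy, hy, flip1_flip1]
      exact hfx
    have hsub : (Finset.univ.filter fun j => flip1 x j ∉ A) ⊆ Sx.erase i ∪ Sy.erase i := by
      intro j hj
      have hjb : flip1 x j ∉ A := (Finset.mem_filter.mp hj).2
      have hjeq : f (flip1 x j) = f (flip1 (flip1 x j) i) := by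
        by_contra hc
        exact hjb (Finset.mem_filter.mpr ⟨Finset.mem_univ _, hc⟩)
      have hji : j ≠ i := by
        rintro rfl
        rw [flip1_flip1] at hjeq
        exact hfx hjeq.symm
      rw [flip1_comm] at hjeq
      by_contra hc
      simp only [Finset.mem_union, Finset.mem_erase, hSx, hSy, Finset.mem_filter,
        Finset.mem_univ, true_and, not_or, not_and, not_not] at hc
      have h1 : f (flip1 x j) = f x := hc.1 hji
      have h2 : f (flip1 y j) = f y := hc.2 hji
      rw [← hy] at hjeq
      rw [hjeq, h2] at h1
      exact hfx h1.symm
    have hsxle : Sx.card ≤ sens f := by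
      have : Sx.card = sx f x := rfl
      rw [this]
      exact Finset.le_sup (Finset.mem_univ x)
    have hsyle : Sy.card ≤ sens f := by
      have : Sy.card = sx f y := rfl
      rw [this]
      exact Finset.le_sup (Finset.mem_univ y)
    calc (Finset.univ.filter fun j => flip1 x j ∉ A).card
        ≤ (Sx.erase i ∪ Sy.erase i).card := Finset.card_le_card hsub
    _ ≤ (Sx.erase i).card + (Sy.erase i).card := Finset.card_union_le _ _
    _ = (Sx.card - 1) + (Sy.card - 1) := by
        rw [Finset.card_erase_of_mem hiSx, Finset.card_erase_of_mem hiSy]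
    _ ≤ 2 * (sens f - 1) := by omega
  have := key (Finset.univ : Finset (Fin n)) (2 * (sens f - 1)) A hne hbound
  simpa [Finset.card_fin] using this

lemma infl_nonneg' {n : ℕ} (f : (Fin n → Bool) → Bool) (i : Fin n) : 0 ≤ infl f i := by
  unfold infl
  positivity

end BF

open BF

/-- `n(f) ≤ I[f]·4^{s(f)−1}`. -/
theorem stmt15 {n : ℕ} (f : (Fin n → Bool) → Bool) :
    (nrel f : ℝ) ≤ totalInf f * (4 : ℝ) ^ ((sens f : ℤ) - 1) := by
  classical
  by_cases hrel : (relSet f).Nonempty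
  · obtain ⟨i0, hi0⟩ := hrel
    have hRel : Rel i0 f := (Finset.mem_filter.mp hi0).2
    obtain ⟨x0, hx0⟩ := hRel
    have hs1 : 1 ≤ sens f := by
      have h1 : 1 ≤ sx f x0 := Finset.card_pos.mpr
        ⟨i0, Finset.mem_filter.mpr ⟨Finset.mem_univ _, hx0⟩⟩
      exact le_trans h1 (Finset.le_sup (Finset.mem_univ x0))
    have hz : (4 : ℝ) ^ ((sens f : ℤ) - 1) = (4 : ℝ) ^ (sens f - 1 : ℕ) := by
      rw [← zpow_natCast]
      congr 1
      omega
    rw [hz]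
    have h4 : (0 : ℝ) < 4 ^ (sens f - 1 : ℕ) := by positivity
    have h2n : (0 : ℝ) < 2 ^ n := by positivity
    have key2 : ∀ i ∈ relSet f, (1 : ℝ) / (4 ^ (sens f - 1 : ℕ)) ≤ infl f i := by
      intro i hi
      have hR : Rel i f := (Finset.mem_filter.mp hi).2
      have hc := rel_card f i hR
      have hcast : (2 : ℝ) ^ n ≤ 4 ^ (sens f - 1 : ℕ) *
          ((Finset.univ.filter fun x : Fin n → Bool => f x ≠ f (flip1 x i)).card : ℝ) := by
        have h24 : (2 : ℝ) ^ (2 * (sens f - 1)) = 4 ^ (sens f - 1 : ℕ) := by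
          rw [pow_mul]; norm_num
        calc (2 : ℝ) ^ n ≤ (2 ^ (2 * (sens f - 1)) *
            ((Finset.univ.filter fun x : Fin n → Bool => f x ≠ f (flip1 x i)).card) : ℕ) := by
              exact_mod_cast hc
        _ = 4 ^ (sens f - 1 : ℕ) *
            ((Finset.univ.filter fun x : Fin n → Bool => f x ≠ f (flip1 x i)).card : ℝ) := by
              push_cast
              rw [h24]
      unfold infl
      rw [div_le_div_iff₀ h4 h2n]
      linarith [hcast]
    have hsum : (nrel f : ℝ) * (1 / 4 ^ (sens f - 1 : ℕ)) ≤ totalInf f := by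
      calc (nrel f : ℝ) * (1 / 4 ^ (sens f - 1 : ℕ))
          = ∑ _i ∈ relSet f, (1 : ℝ) / (4 ^ (sens f - 1 : ℕ)) := by
            rw [Finset.sum_const, nrel, nsmul_eq_mul]
      _ ≤ ∑ i ∈ relSet f, infl f i := Finset.sum_le_sum key2
      _ ≤ ∑ i, infl f i := Finset.sum_le_sum_of_subset_of_nonneg
            (Finset.subset_univ _) (fun i _ _ => infl_nonneg' f i)
      _ = totalInf f := rfl
    calc (nrel f : ℝ) = ((nrel f : ℝ) * (1 / 4 ^ (sens f - 1 : ℕ))) * 4 ^ (sens f - 1 : ℕ) := by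
          field_simp
    _ ≤ totalInf f * 4 ^ (sens f - 1 : ℕ) := mul_le_mul_of_nonneg_right hsum h4.le
  · have h0 : nrel f = 0 := by
      rw [nrel, Finset.card_eq_zero]
      exact Finset.not_nonempty_iff_eq_empty.mp hrel
    rw [h0]
    have hI : 0 ≤ totalInf f := Finset.sum_nonneg fun i _ => infl_nonneg' f i
    have h4 : (0 : ℝ) ≤ (4 : ℝ) ^ ((sens f : ℤ) - 1) := by positivity
    simpa using mul_nonneg hI h4
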